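/- arXiv:2106.13962 — 2 statements merged into one kernel-verified Lean document; each statement's English description precedes it below -/
import Mathlib

section
/- For any real numbers y_1, ..., y_n and any β > 0, the weighted L² distance n ∫_{-∞}^{∞} |ψ_n(t) - e^{-t²/2}|² φ_β(t) dt, where ψ_n(t) = (1/n) Σ_{j=1}^n exp(i t y_j) and φ_β(t) = (β√(2π))^{-1} exp(-t²/(2β²)), equals the closed-form expression (1/n) Σ_{j,k=1}^n exp(-(β²/2)(y_j - y_k)²) - (2/√(1+β²)) Σ_{j=1}^n exp(-β² y_j²/(2(1+β²))) + n/√(1+2β²). -/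
open MeasureTheory Real Complex Finset

/-!
Expanding `‖c ∑ⱼ exp(i t yⱼ) - exp(-t²/2)‖²` gives a combination of the functions
`cos(a t) exp(-s t²/2)` with `s ∈ {0, 1, 2}`. Against the centred normal density of variance `β²`
each of them integrates, by the Fourier transform of a Gaussian, to
`exp(-β² a² / (2 (1 + s β²))) / √(1 + s β²)`.
-/

theorem integrable_cos_mul_exp_neg_mul_sq {b : ℝ} (hb : 0 < b) (a : ℝ) :
    Integrable fun x : ℝ ↦ Real.cos (a * x) * Real.exp (-b * x ^ 2) :=
  (integrable_exp_neg_mul_sq hb).bdd_mul (by fun_prop) (.of_forall fun x ↦ by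
    simpa using abs_cos_le_one (a * x))

theorem integral_cos_mul_exp_neg_mul_sq {b : ℝ} (hb : 0 < b) (a : ℝ) :
    ∫ x : ℝ, Real.cos (a * x) * Real.exp (-b * x ^ 2) = √(π / b) * Real.exp (-a ^ 2 / (4 * b)) := by
  have h := fourierIntegral_gaussian (b := b) (by simpa using hb) a
  have hre : ∀ x : ℝ, Real.cos (a * x) * Real.exp (-b * x ^ 2)
      = (cexp (I * a * x) * cexp (-b * x ^ 2)).re := by
    intro x
    rw [← ofReal_neg, ← ofReal_pow, ← ofReal_mul, ← ofReal_exp, re_mul_ofReal,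
      show I * a * x = ((a * x : ℝ) : ℂ) * I by push_cast; ring, exp_ofReal_mul_I_re]
  have hint : Integrable fun x : ℝ ↦ cexp (I * a * x) * cexp (-b * x ^ 2) := by
    simpa [← Complex.exp_add, add_comm, mul_comm] using
      integrable_cexp_quadratic (b := b) (by simpa using hb) (I * a) 0
  simp_rw [hre]
  rw [← RCLike.re_eq_complex_re, integral_re hint, RCLike.re_eq_complex_re, h,
    ← ofReal_div, show (1 / 2 : ℂ) = ((1 / 2 : ℝ) : ℂ) by norm_num,
    ← ofReal_cpow (by positivity), ← sqrt_eq_rpow]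
  norm_cast

theorem sq_norm_ofReal_mul_sum_exp_sub {ι : Type*} [Fintype ι] (c g t : ℝ) (y : ι → ℝ) :
    ‖(c : ℂ) * ∑ j, cexp (I * t * y j) - g‖ ^ 2
      = c ^ 2 * ∑ j, ∑ k, Real.cos ((y j - y k) * t) - 2 * c * g * ∑ j, Real.cos (y j * t)
        + g ^ 2 := by
  have hexp : ∀ j, cexp (I * t * y j) = cexp ((y j * t : ℝ) * I) := fun j ↦ by
    push_cast; ring_nf
  simp_rw [hexp, Complex.sq_norm, normSq_apply, sub_re, sub_im, mul_re, mul_im, ofReal_re,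
    ofReal_im, re_sum, im_sum, exp_ofReal_mul_I_re, exp_ofReal_mul_I_im, sub_mul, Real.cos_sub,
    sum_add_distrib, ← sum_mul_sum]
  ring

noncomputable def normalDensity (β t : ℝ) : ℝ :=
  1 / (β * √(2 * π)) * Real.exp (-t ^ 2 / (2 * β ^ 2))

section normalDensity

variable {β : ℝ}

theorem exp_mul_normalDensity (hβ : β ≠ 0) (s t : ℝ) :
    Real.exp (-s * t ^ 2 / 2) * normalDensity β t
      = 1 / (β * √(2 * π)) * Real.exp (-((1 + s * β ^ 2) / (2 * β ^ 2)) * t ^ 2) := by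
  rw [normalDensity, mul_left_comm, ← Real.exp_add]
  congr 2
  field_simp
  ring

theorem integrable_cos_mul_exp_mul_normalDensity (hβ : β ≠ 0) {s : ℝ} (hs : 0 < 1 + s * β ^ 2)
    (a : ℝ) :
    Integrable fun t ↦ Real.cos (a * t) * Real.exp (-s * t ^ 2 / 2) * normalDensity β t := by
  simp_rw [mul_assoc, exp_mul_normalDensity hβ, mul_left_comm (Real.cos _)]
  exact (integrable_cos_mul_exp_neg_mul_sq (by positivity) a).const_mul _

theorem integral_cos_mul_exp_mul_normalDensity (hβ : 0 < β) {s : ℝ} (hs : 0 < 1 + s * β ^ 2)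
    (a : ℝ) :
    ∫ t, Real.cos (a * t) * Real.exp (-s * t ^ 2 / 2) * normalDensity β t
      = Real.exp (-(β ^ 2 * a ^ 2) / (2 * (1 + s * β ^ 2))) / √(1 + s * β ^ 2) := by
  simp_rw [mul_assoc, exp_mul_normalDensity hβ.ne', mul_left_comm (Real.cos _)]
  rw [integral_const_mul, integral_cos_mul_exp_neg_mul_sq (by positivity)]
  have hsqrt : √(π / ((1 + s * β ^ 2) / (2 * β ^ 2))) = β * √(2 * π) / √(1 + s * β ^ 2) := by
    rw [← Real.sqrt_sq (by positivity : 0 ≤ β * √(2 * π)), ← Real.sqrt_div' _ hs.le, mul_pow,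
      sq_sqrt (by positivity)]
    congr 1
    field_simp
  rw [hsqrt]
  field_simp
  congr 2
  field_simp
  ring

theorem integral_sq_norm_ofReal_mul_sum_exp_sub_mul_normalDensity {ι : Type*} [Fintype ι]
    (hβ : 0 < β) (c : ℝ) (y : ι → ℝ) :
    ∫ t : ℝ, ‖(c : ℂ) * ∑ j, cexp (I * t * y j) - (Real.exp (-t ^ 2 / 2) : ℂ)‖ ^ 2
        * normalDensity β t
      = c ^ 2 * ∑ j, ∑ k, Real.exp (-(β ^ 2 / 2) * (y j - y k) ^ 2)
        - 2 * c / √(1 + β ^ 2) * ∑ j, Real.exp (-(β ^ 2 * y j ^ 2) / (2 * (1 + β ^ 2)))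
        + 1 / √(1 + 2 * β ^ 2) := by
  have hint (s a : ℝ) (hs : 0 ≤ s) :=
    integrable_cos_mul_exp_mul_normalDensity hβ.ne' (by positivity : 0 < 1 + s * β ^ 2) a
  have hval (s a : ℝ) (hs : 0 ≤ s) :=
    integral_cos_mul_exp_mul_normalDensity hβ (by positivity : 0 < 1 + s * β ^ 2) a
  have hexpand (t : ℝ) :
      ‖(c : ℂ) * ∑ j, cexp (I * t * y j) - (Real.exp (-t ^ 2 / 2) : ℂ)‖ ^ 2 * normalDensity β t
        = c ^ 2 * ∑ j, ∑ k, Real.cos ((y j - y k) * t) * Real.exp (-0 * t ^ 2 / 2)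
              * normalDensity β t
          - 2 * c * ∑ j, Real.cos (y j * t) * Real.exp (-1 * t ^ 2 / 2) * normalDensity β t
          + Real.cos (0 * t) * Real.exp (-2 * t ^ 2 / 2) * normalDensity β t := by
    rw [sq_norm_ofReal_mul_sum_exp_sub,
      show Real.exp (-2 * t ^ 2 / 2) = Real.exp (-t ^ 2 / 2) ^ 2 by
        rw [← Real.exp_nat_mul]; ring_nf]
    simp only [neg_zero, zero_mul, zero_div, Real.exp_zero, mul_one, Real.cos_zero, one_mul,
      neg_one_mul, ← sum_mul]
    ring
  have hsum₀ := integrable_finsetSum univ fun j _ ↦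
    integrable_finsetSum univ fun k _ ↦ hint 0 (y j - y k) le_rfl
  have hsum₁ := integrable_finsetSum univ fun j _ ↦ hint 1 (y j) zero_le_one
  rw [integral_congr_ae (.of_forall hexpand), integral_add, integral_sub, integral_const_mul,
    integral_const_mul, integral_finsetSum _ fun j _ ↦ hint 1 (y j) zero_le_one,
    integral_finsetSum _ fun j _ ↦ integrable_finsetSum _ fun k _ ↦ hint 0 (y j - y k) le_rfl]
  · simp only [fun j ↦ integral_finsetSum univ fun k _ ↦ hint 0 (y j - y k) le_rfl,
      hval 0 _ le_rfl, hval 1 _ zero_le_one, hval 2 _ zero_le_two]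
    simp only [zero_mul, add_zero, one_mul, mul_one, Real.sqrt_one, div_one, neg_mul, neg_div,
      div_mul_eq_mul_div, zero_pow two_ne_zero, mul_zero, neg_zero, zero_div, Real.exp_zero,
      ← sum_div]
    ring
  exacts [hsum₀.const_mul _, hsum₁.const_mul _, (hsum₀.const_mul _).sub (hsum₁.const_mul _),
    hint 2 0 zero_le_two]

end normalDensity

/-- Epps–Pulley closed form: for real numbers `y 1, …, y n` and `β > 0`,
the weighted L² distance
`n ∫ |ψ_n(t) - e^{-t²/2}|² φ_β(t) dt`,
where `ψ_n(t) = (1/n) ∑_j exp(i t y_j)` is the empirical characteristic function and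
`φ_β` is the centred normal density with variance `β²`, equals the closed-form
expression from equation (1) of the paper. -/
theorem eppsPulley_closed_form (n : ℕ) (hn : 0 < n) (y : Fin n → ℝ) (β : ℝ) (hβ : 0 < β) :
    (n : ℝ) * ∫ t : ℝ,
        ‖(1 / (n : ℂ)) * ∑ j, Complex.exp (Complex.I * (t : ℂ) * (y j : ℂ))
            - (Real.exp (-t ^ 2 / 2) : ℂ)‖ ^ 2
          * ((1 / (β * Real.sqrt (2 * Real.pi))) * Real.exp (-t ^ 2 / (2 * β ^ 2)))
      = (1 / (n : ℝ)) * ∑ j, ∑ k, Real.exp (-(β ^ 2 / 2) * (y j - y k) ^ 2)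
        - (2 / Real.sqrt (1 + β ^ 2))
            * ∑ j, Real.exp (-(β ^ 2 * (y j) ^ 2) / (2 * (1 + β ^ 2)))
        + (n : ℝ) / Real.sqrt (1 + 2 * β ^ 2) := by
  rw [show (1 / (n : ℂ)) = ((1 / n : ℝ) : ℂ) by push_cast; rfl]
  change (n : ℝ) * ∫ t : ℝ, ‖_‖ ^ 2 * normalDensity β t = _
  rw [integral_sq_norm_ofReal_mul_sum_exp_sub_mul_normalDensity hβ]
  have hn' : (n : ℝ) ≠ 0 := by positivity
  field_simp
end

section
/- Let δ > 0 and let m, s : ℝ → ℝ be three times continuously differentiable in a neighbourhood of 0 with m(0) = 0, m'(0) = μ₁, m''(0) = μ₂, s(0) = 1, s'(0) = σ₁, s''(0) = σ₂. Define U(x) = σ₁x² + 2μ₁x and V(x) = δσ₁²x⁴ + 4δμ₁σ₁x³ + (4δμ₁² - 2σ₁² + σ₂)x² - (4μ₁σ₁ - 2μ₂)x - 2μ₁². Then for each fixed x ∈ ℝ, as θ → 0, exp(-δ(x - m(θ))²/s(θ)) - e^{-δx²} ( 1 + δθ U(x) + (δθ²/2) V(x) ) = O(θ³). -/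
/-!
Write `f θ = a + b θ + c θ² + O(θ³)` for a second-order expansion at `0`. The `C³` functions `m`
and `s` have one by Taylor's theorem, and such expansions can be added, multiplied, inverted when
`a ≠ 0` and composed with `exp`, the coefficients obeying the rules for truncated power series.
Propagating the expansions of `m` and `s` through `θ ↦ exp (-δ (x - m θ)² / s θ)` yields the
coefficients `e^{-δx²}`, `e^{-δx²} δ U(x)` and `e^{-δx²} δ V(x) / 2`.
-/

open Filter Asymptotics Topology

def HasQuadraticExpansion {𝕜 : Type*} [NormedField 𝕜] (f : 𝕜 → 𝕜) (a b c : 𝕜) : Prop :=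
  (fun θ => f θ - (a + b * θ + c * θ ^ 2)) =O[𝓝 0] fun θ => θ ^ 3

theorem Asymptotics.IsBigO.mul_of_tendsto {α 𝕜 : Type*} [NormedField 𝕜] {l : Filter α}
    {f g u : α → 𝕜} {a : 𝕜} (hf : f =O[l] g) (hu : Tendsto u l (𝓝 a)) :
    (fun x => f x * u x) =O[l] g := by
  simpa using hf.mul (hu.isBigO_one 𝕜)

theorem ContDiffAt.hasQuadraticExpansion {f : ℝ → ℝ} (hf : ContDiffAt ℝ 3 f 0) :
    HasQuadraticExpansion f (f 0) (deriv f 0) (deriv (deriv f) 0 / 2) := by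
  obtain ⟨u, hu, hfu⟩ := hf.contDiffOn le_rfl (by norm_num)
  obtain ⟨ε, hε, hball⟩ := Metric.mem_nhds_iff.1 hu
  have hT := taylor_isLittleO (n := 3) (convex_ball 0 ε) (Metric.mem_ball_self hε)
    (hfu.mono hball)
  rw [nhdsWithin_eq_nhds.2 (Metric.ball_mem_nhds 0 hε)] at hT
  simp only [sub_zero] at hT
  have hD : ∀ k, iteratedDerivWithin k f (Metric.ball 0 ε) 0 = iteratedDeriv k f 0 :=
    fun k => iteratedDerivWithin_of_isOpen Metric.isOpen_ball (Metric.mem_ball_self hε)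
  -- the cubic Taylor term is itself `O(θ³)`
  refine (hT.isBigO.add (isBigO_const_mul_self (iteratedDeriv 3 f 0 / 6) _ _)).congr_left
    fun θ => ?_
  simp only [taylor_within_apply, Finset.sum_range_succ, Finset.sum_range_zero, hD,
    iteratedDeriv_succ, iteratedDeriv_zero, Nat.factorial, smul_eq_mul, sub_zero]
  push_cast
  ring

namespace HasQuadraticExpansion

variable {𝕜 : Type*} [NormedField 𝕜] {f g : 𝕜 → 𝕜} {a b c a' b' c' : 𝕜}

theorem of_isBigO_sub (hg : HasQuadraticExpansion g a b c)
    (h : (fun θ => f θ - g θ) =O[𝓝 0] fun θ => θ ^ 3) : HasQuadraticExpansion f a b c :=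
  (h.add hg).congr_left fun θ => by ring

theorem polynomial (a b c : 𝕜) :
    HasQuadraticExpansion (fun θ => a + b * θ + c * θ ^ 2) a b c := by
  simpa [HasQuadraticExpansion] using isBigO_zero _ _

theorem const (a : 𝕜) : HasQuadraticExpansion (fun _ => a) a 0 0 := by
  simpa using polynomial a (0 : 𝕜) 0

theorem isBigO_sub_const (hf : HasQuadraticExpansion f a b c) :
    (fun θ => f θ - a) =O[𝓝 0] fun θ => θ := by
  have hθ : Tendsto (fun θ : 𝕜 => θ) (𝓝 0) (𝓝 0) := tendsto_id
  have hcube : (fun θ : 𝕜 => θ ^ 3) =O[𝓝 0] fun θ => θ :=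
    ((isBigO_refl _ _).mul_of_tendsto (hθ.pow 2)).congr_left fun θ => by ring
  have hlin : (fun θ : 𝕜 => θ * (b + c * θ)) =O[𝓝 0] fun θ => θ :=
    (isBigO_refl _ _).mul_of_tendsto
      (by simpa using tendsto_const_nhds.add (tendsto_const_nhds.mul hθ))
  exact ((hf.trans hcube).add hlin).congr_left fun θ => by ring

theorem tendsto (hf : HasQuadraticExpansion f a b c) : Tendsto f (𝓝 0) (𝓝 a) := by
  simpa using (hf.isBigO_sub_const.trans_tendsto tendsto_id).add_const a

theorem add (hf : HasQuadraticExpansion f a b c) (hg : HasQuadraticExpansion g a' b' c') :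
    HasQuadraticExpansion (fun θ => f θ + g θ) (a + a') (b + b') (c + c') :=
  (IsBigO.add hf hg).congr_left fun θ => by ring

theorem sub (hf : HasQuadraticExpansion f a b c) (hg : HasQuadraticExpansion g a' b' c') :
    HasQuadraticExpansion (fun θ => f θ - g θ) (a - a') (b - b') (c - c') :=
  (IsBigO.sub hf hg).congr_left fun θ => by ring

theorem const_mul (hf : HasQuadraticExpansion f a b c) (k : 𝕜) :
    HasQuadraticExpansion (fun θ => k * f θ) (k * a) (k * b) (k * c) :=
  (hf.const_mul_left k).congr_left fun θ => by ring

theorem mul (hf : HasQuadraticExpansion f a b c) (hg : HasQuadraticExpansion g a' b' c') :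
    HasQuadraticExpansion (fun θ => f θ * g θ) (a * a') (a * b' + b * a')
      (a * c' + b * b' + c * a') := by
  have hθ : Tendsto (fun θ : 𝕜 => θ) (𝓝 0) (𝓝 0) := tendsto_id
  have hp : Tendsto (fun θ : 𝕜 => a + b * θ + c * θ ^ 2) (𝓝 0) (𝓝 a) :=
    (polynomial a b c).tendsto
  have hcubic : (fun θ : 𝕜 => θ ^ 3 * (b * c' + c * b' + c * c' * θ)) =O[𝓝 0] fun θ => θ ^ 3 :=
    (isBigO_refl _ _).mul_of_tendsto (tendsto_const_nhds.add (tendsto_const_nhds.mul hθ))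
  refine ((hf.mul_of_tendsto hg.tendsto).add ((hg.mul_of_tendsto hp).add hcubic)).congr_left
    fun θ => ?_
  ring

theorem sq (hf : HasQuadraticExpansion f a b c) :
    HasQuadraticExpansion (fun θ => f θ ^ 2) (a ^ 2) (2 * a * b) (2 * a * c + b ^ 2) := by
  convert hf.mul hf using 1
  · ext θ
    ring
  all_goals ring

theorem inv (hg : HasQuadraticExpansion g a b c) (ha : a ≠ 0) :
    HasQuadraticExpansion (fun θ => (g θ)⁻¹) a⁻¹ (-b / a ^ 2) (b ^ 2 / a ^ 3 - c / a ^ 2) := by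
  have hgJ : HasQuadraticExpansion
      (fun θ => g θ * (a⁻¹ + -b / a ^ 2 * θ + (b ^ 2 / a ^ 3 - c / a ^ 2) * θ ^ 2)) 1 0 0 := by
    convert hg.mul (polynomial _ _ _) using 1 <;> field_simp <;> ring
  -- `g⁻¹ - J = -(g J - 1) g⁻¹` where `J` is the claimed expansion, and `g J = 1 + O(θ³)`
  refine (hgJ.mul_of_tendsto (hg.tendsto.inv₀ ha)).neg_left.congr' ?_ EventuallyEq.rfl
  filter_upwards [hg.tendsto.eventually_ne ha] with θ hθ
  field_simp
  ring

theorem div (hf : HasQuadraticExpansion f a b c) (hg : HasQuadraticExpansion g a' b' c')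
    (ha' : a' ≠ 0) :
    HasQuadraticExpansion (fun θ => f θ / g θ) (a / a') ((b * a' - a * b') / a' ^ 2)
      ((c * a' ^ 2 - (a * c' + b * b') * a' + a * b' ^ 2) / a' ^ 3) := by
  convert hf.mul (hg.inv ha') using 1 <;> field_simp <;> ring

theorem exp {f : ℝ → ℝ} {a b c : ℝ} (hf : HasQuadraticExpansion f a b c) :
    HasQuadraticExpansion (fun θ => Real.exp (f θ)) (Real.exp a) (Real.exp a * b)
      (Real.exp a * (c + b ^ 2 / 2)) := by
  have hexp : HasQuadraticExpansion Real.exp 1 1 (1 / 2) := by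
    simpa using Real.contDiff_exp.contDiffAt.hasQuadraticExpansion
  have hy : HasQuadraticExpansion (fun θ => f θ - a) 0 b c := by
    simpa using hf.sub (const a)
  -- `f - a = O(θ)`, so the `O(t³)` remainder of `exp t` at `t = f θ - a` is `O(θ³)`
  have hrem : (fun θ => Real.exp (f θ - a) - (1 + (f θ - a) + 1 / 2 * (f θ - a) ^ 2))
      =O[𝓝 0] fun θ => θ ^ 3 := by
    refine ((hexp.comp_tendsto hy.tendsto).trans (hf.isBigO_sub_const.pow 3)).congr_left
      fun θ => ?_
    simp
  have hpoly : HasQuadraticExpansion (fun θ => 1 + (f θ - a) + 1 / 2 * (f θ - a) ^ 2)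
      1 b (c + b ^ 2 / 2) := by
    convert ((const 1).add hy).add (hy.sq.const_mul (1 / 2)) using 1 <;> ring
  convert (hpoly.of_isBigO_sub hrem).const_mul (Real.exp a) using 1
  · ext θ
    rw [← Real.exp_add, add_sub_cancel]
  · ring

end HasQuadraticExpansion

open HasQuadraticExpansion in
theorem exp_standardized_taylor_general (δ : ℝ) (μ₁ μ₂ σ₁ σ₂ : ℝ) (m s : ℝ → ℝ)
    (hm : ContDiffAt ℝ 3 m 0) (hs : ContDiffAt ℝ 3 s 0)
    (hm0 : m 0 = 0) (hm1 : deriv m 0 = μ₁) (hm2 : deriv (deriv m) 0 = μ₂)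
    (hs0 : s 0 = 1) (hs1 : deriv s 0 = σ₁) (hs2 : deriv (deriv s) 0 = σ₂)
    (U V : ℝ → ℝ)
    (hU : ∀ x, U x = σ₁ * x ^ 2 + 2 * μ₁ * x)
    (hV : ∀ x, V x = δ * σ₁ ^ 2 * x ^ 4 + 4 * δ * μ₁ * σ₁ * x ^ 3
        + (4 * δ * μ₁ ^ 2 - 2 * σ₁ ^ 2 + σ₂) * x ^ 2 - (4 * μ₁ * σ₁ - 2 * μ₂) * x
        - 2 * μ₁ ^ 2)
    (x : ℝ) :
    (fun θ : ℝ =>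
        Real.exp (-δ * (x - m θ) ^ 2 / s θ)
          - Real.exp (-δ * x ^ 2) * (1 + δ * θ * U x + (δ * θ ^ 2 / 2) * V x))
      =O[nhds 0] (fun θ : ℝ => θ ^ 3) := by
  have hmExp := hm.hasQuadraticExpansion
  rw [hm0, hm1, hm2] at hmExp
  have hsExp := hs.hasQuadraticExpansion
  rw [hs0, hs1, hs2] at hsExp
  have hF := ((((const x).sub hmExp).sq.const_mul (-δ)).div hsExp one_ne_zero).exp
  refine hF.congr_left fun θ => ?_
  simp only [sub_zero, div_one, hU, hV]
  ring

/-- let `δ > 0` and let `m, s : ℝ → ℝ` be three times continuously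
differentiable in a neighbourhood of `0` with `m(0) = 0`, `m'(0) = μ₁`, `m''(0) = μ₂`,
`s(0) = 1`, `s'(0) = σ₁`, `s''(0) = σ₂`. With
`U(x) = σ₁x² + 2μ₁x` and
`V(x) = δσ₁²x⁴ + 4δμ₁σ₁x³ + (4δμ₁² - 2σ₁² + σ₂)x² - (4μ₁σ₁ - 2μ₂)x - 2μ₁²`,
for each fixed `x`, as `θ → 0`,
`exp(-δ(x-m(θ))²/s(θ)) - e^{-δx²}(1 + δθU(x) + (δθ²/2)V(x))` is `O(θ³)`. -/
theorem exp_standardized_taylor (δ : ℝ) (hδ : 0 < δ) (μ₁ μ₂ σ₁ σ₂ : ℝ) (m s : ℝ → ℝ)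
    (hm : ContDiffAt ℝ 3 m 0) (hs : ContDiffAt ℝ 3 s 0)
    (hm0 : m 0 = 0) (hm1 : deriv m 0 = μ₁) (hm2 : deriv (deriv m) 0 = μ₂)
    (hs0 : s 0 = 1) (hs1 : deriv s 0 = σ₁) (hs2 : deriv (deriv s) 0 = σ₂)
    (U V : ℝ → ℝ)
    (hU : ∀ x, U x = σ₁ * x ^ 2 + 2 * μ₁ * x)
    (hV : ∀ x, V x = δ * σ₁ ^ 2 * x ^ 4 + 4 * δ * μ₁ * σ₁ * x ^ 3
        + (4 * δ * μ₁ ^ 2 - 2 * σ₁ ^ 2 + σ₂) * x ^ 2 - (4 * μ₁ * σ₁ - 2 * μ₂) * x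
        - 2 * μ₁ ^ 2)
    (x : ℝ) :
    (fun θ : ℝ =>
        Real.exp (-δ * (x - m θ) ^ 2 / s θ)
          - Real.exp (-δ * x ^ 2) * (1 + δ * θ * U x + (δ * θ ^ 2 / 2) * V x))
      =O[nhds 0] (fun θ : ℝ => θ ^ 3) :=
  exp_standardized_taylor_general δ μ₁ μ₂ σ₁ σ₂ m s hm hs hm0 hm1 hm2 hs0 hs1 hs2 U V hU hV x
end
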